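/- arXiv:2207.08479 — 7 statements merged into one kernel-verified Lean document; each statement's English description precedes it below -/
import Mathlib

section
/- Let V₀ > 0 and 0 < α < 1/3, and on t < 0 set V(φ) = -V₀·e^{-√(2/α)·φ}, φ(t) = √(2α)·ln(-√(V₀/(α(1-3α)))·t), ρ(t) = (1/2)φ'(t)² + V(φ(t)) and P(t) = (1/2)φ'(t)² - V(φ(t)). Then for every t < 0 one has ρ(t) ≠ 0 and P(t)/ρ(t) = -1 + 2/(3α), and this equation-of-state parameter is strictly greater than 1. -/
/-!
Along the attractor `φ' = √(2α)/t`, so the kinetic energy is `α/t²`. Since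
`√(2/α)·√(2α) = 2`, the potential along it is `-V₀/(s t)² = -α(1-3α)/t²`, where
`s² = V₀/(α(1-3α))`. Hence `ρ = 3α²/t²` and `P = α(2-3α)/t²`.
-/

open Real

lemma deriv_const_mul_log_const_mul {a b t : ℝ} (hb : b ≠ 0) (ht : t ≠ 0) :
    deriv (fun t => a * log (b * t)) t = a / t := by
  have hlog : HasDerivAt (fun t => log (b * t)) (b / (b * t)) t := by
    simpa using ((hasDerivAt_id t).const_mul b).log (mul_ne_zero hb ht)
  rw [(hlog.const_mul a).deriv]
  field_simp

lemma sqrt_div_mul_sqrt_mul {c α : ℝ} (hc : 0 ≤ c) (hα : 0 < α) :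
    √(c / α) * √(c * α) = c := by
  rw [← sqrt_mul (by positivity), show c / α * (c * α) = c ^ 2 by field_simp, sqrt_sq hc]

lemma exp_neg_mul_mul_log {k a x : ℝ} (hka : k * a = 2) (hx : x ≠ 0) :
    exp (-k * (a * log x)) = (x ^ 2)⁻¹ := by
  rw [show -k * (a * log x) = -(log x + log x) by rw [← mul_assoc, neg_mul, hka]; ring,
    exp_neg, exp_add, exp_log_eq_abs hx, ← sq, sq_abs]

/-- On the ekpyrotic attractor `φ(t) = √(2α)·log(-√(V₀/(α(1-3α)))·t)` of the
negative exponential potential `V(φ) = -V₀·exp(-√(2/α)·φ)` (`V₀ > 0`,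
`0 < α < 1/3`), the energy density `ρ = (1/2)φ'² + V(φ)` is nonzero on `t < 0`,
the equation-of-state parameter `P/ρ` equals `-1 + 2/(3α)`, and this value is
strictly greater than `1` (super-stiff fluid). -/
theorem ekpyrotic_attractor_equation_of_state
    (V₀ α : ℝ) (hV₀ : 0 < V₀) (hα : 0 < α) (hα' : α < 1/3) :
    let V : ℝ → ℝ := fun x => -V₀ * Real.exp (-(Real.sqrt (2/α)) * x)
    let φ : ℝ → ℝ := fun t =>
      Real.sqrt (2*α) * Real.log (-(Real.sqrt (V₀ / (α * (1 - 3*α)))) * t)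
    let ρ : ℝ → ℝ := fun t => (1/2) * (deriv φ t)^2 + V (φ t)
    let P : ℝ → ℝ := fun t => (1/2) * (deriv φ t)^2 - V (φ t)
    (∀ t : ℝ, t < 0 → ρ t ≠ 0 ∧ P t / ρ t = -1 + 2/(3*α)) ∧
      1 < -1 + 2/(3*α) := by
  intro V φ ρ P
  have hαβ : 0 < α * (1 - 3 * α) := mul_pos hα (by linarith)
  set s := √(V₀ / (α * (1 - 3 * α)))
  have hs : 0 < s := sqrt_pos.2 (by positivity)
  refine ⟨fun t ht => ?_, ?_⟩
  · have hkin : (1/2) * (deriv φ t)^2 = α / t^2 := by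
      rw [deriv_const_mul_log_const_mul (neg_ne_zero.2 hs.ne') ht.ne, div_pow,
        sq_sqrt (by positivity)]
      ring
    have hpot : V (φ t) = -(α * (1 - 3 * α)) / t^2 := by
      have hst : -s * t ≠ 0 := mul_ne_zero (neg_ne_zero.2 hs.ne') ht.ne
      change -V₀ * exp (-√(2 / α) * (√(2 * α) * log (-s * t))) = _
      rw [exp_neg_mul_mul_log (sqrt_div_mul_sqrt_mul zero_le_two hα) hst, mul_pow, neg_sq,
        sq_sqrt (div_pos hV₀ hαβ).le]
      field_simp
    have hρ : ρ t = 3 * α^2 / t^2 := by simp only [ρ, hkin, hpot]; ring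
    have hP : P t = α * (2 - 3 * α) / t^2 := by simp only [P, hkin, hpot]; ring
    refine ⟨hρ ▸ div_ne_zero (by positivity) (pow_ne_zero 2 ht.ne), ?_⟩
    rw [hρ, hP, div_div_div_cancel_right₀ (pow_ne_zero 2 ht.ne)]
    field_simp
    ring
  · have : 2 < 2 / (3 * α) := by rw [lt_div_iff₀ (by positivity)]; linarith
    linarith
end

section
/- For every α > 0, the two points (u₁, u₄, q) = ((1 + α ± √(α² + 10α + 1))/(2α), 0, (1-α)/α) are equilibrium points of the vacuum form-independent dynamical system, i.e. F vanishes at both points K₁₋ and K₁₊. -/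
/-!
On the line `u₄ = 0`, `q = (1 - α)/α` the last two components of the field vanish, and
`α` times the first one is the quadratic `α u₁² - (1 + α) u₁ - 2`, whose discriminant is
`(1 + α)² + 8α = α² + 10α + 1`. The points `K₁∓` are its two roots.
-/

/-- The vacuum form-independent dynamical system with parameter `α`, in
coordinates `(u₁, u₄, q)`. -/
noncomputable def vacuumFormIndepField (α u₁ u₄ q : ℝ) : ℝ × ℝ × ℝ :=
  (u₁ * (u₁ - 2 - q) - 2*q + 6*u₄^2 - 2,
   u₄ * (2 - q + u₁),
   -2 * (q - (1-α)/α) * (q - (2-α)/α))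

lemma vacuumFormIndepField_eq_zero_of_quadratic_eq_zero {α u₁ : ℝ} (hα : α ≠ 0)
    (hu₁ : α * (u₁ * u₁) + -(1 + α) * u₁ + -2 = 0) :
    vacuumFormIndepField α u₁ 0 ((1 - α) / α) = (0, 0, 0) := by
  simp only [vacuumFormIndepField, Prod.mk.injEq]
  refine ⟨?_, by ring, by ring⟩
  field_simp
  linear_combination hu₁

lemma discrim_K1 {α : ℝ} (hα : 0 < α) :
    discrim α (-(1 + α)) (-2) = √(α^2 + 10*α + 1) * √(α^2 + 10*α + 1) := by
  rw [Real.mul_self_sqrt (by positivity), discrim]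
  ring

/-- For every `α > 0`, the two points
`K₁∓ = ((1 + α ∓ √(α² + 10α + 1))/(2α), 0, (1-α)/α)` are equilibrium points of
the vacuum form-independent dynamical system. -/
theorem K1_equilibrium_points (α : ℝ) (hα : 0 < α) :
    vacuumFormIndepField α
        ((1 + α - Real.sqrt (α^2 + 10*α + 1))/(2*α)) 0 ((1-α)/α) = (0, 0, 0) ∧
    vacuumFormIndepField α
        ((1 + α + Real.sqrt (α^2 + 10*α + 1))/(2*α)) 0 ((1-α)/α) = (0, 0, 0) := by
  have roots := quadratic_eq_zero_iff hα.ne' (discrim_K1 hα)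
  constructor
  · refine vacuumFormIndepField_eq_zero_of_quadratic_eq_zero hα.ne' ((roots _).2 (Or.inr ?_))
    ring
  · refine vacuumFormIndepField_eq_zero_of_quadratic_eq_zero hα.ne' ((roots _).2 (Or.inl ?_))
    ring
end

section
/- For every α > 0, the two points (u₁, u₄, q) = ((2 + α ± √(α² + 20α + 4))/(2α), 0, (2-α)/α) are equilibrium points of the vacuum form-independent dynamical system, i.e. F vanishes at both points K₂₋ and K₂₊. -/
/-! On the invariant line `u₄ = 0, q = (2-α)/α` the field reduces, after multiplying by `α`,
to the quadratic `α u₁² - (2+α) u₁ - 4`, whose discriminant is `α² + 20α + 4`; the points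
`K₂∓` are exactly its two roots. -/

theorem vacuumFormIndepField_eq_zero_iff_quadratic {α : ℝ} (hα : α ≠ 0) (u : ℝ) :
    vacuumFormIndepField α u 0 ((2-α)/α) = (0, 0, 0) ↔
      α * (u * u) + -(2 + α) * u + -4 = 0 := by
  simp only [vacuumFormIndepField, Prod.mk.injEq, sub_self, mul_zero, zero_mul, and_true]
  constructor <;> intro h
  · field_simp at h
    linear_combination h
  · field_simp
    linear_combination h

/-- For every `α > 0`, the two points
`K₂∓ = ((2 + α ∓ √(α² + 20α + 4))/(2α), 0, (2-α)/α)` are equilibrium points of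
the vacuum form-independent dynamical system. -/
theorem K2_equilibrium_points (α : ℝ) (hα : 0 < α) :
    vacuumFormIndepField α
        ((2 + α - Real.sqrt (α^2 + 20*α + 4))/(2*α)) 0 ((2-α)/α) = (0, 0, 0) ∧
    vacuumFormIndepField α
        ((2 + α + Real.sqrt (α^2 + 20*α + 4))/(2*α)) 0 ((2-α)/α) = (0, 0, 0) := by
  have hdisc : discrim α (-(2 + α)) (-4) = √(α^2 + 20*α + 4) * √(α^2 + 20*α + 4) := by
    rw [Real.mul_self_sqrt (by positivity), discrim]
    ring
  have hroots := quadratic_eq_zero_iff hα.ne' hdisc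
  simp only [neg_neg] at hroots
  simp only [vacuumFormIndepField_eq_zero_iff_quadratic hα.ne', hroots, true_or, or_true,
    and_self]
end

section
/- For 0 < α < 1 let u₁ = (1 + α - √(α² + 10α + 1))/(2α) and q = (1-α)/α (the coordinates of the equilibrium point K₁₋). Then u₁ - q + 2 = (7α - 1 - √(α² + 10α + 1))/(2α); this quantity is strictly negative if and only if α < 1/2, and equals zero when α = 1/2. Hence small anisotropy decays at K₁₋ exactly when 0 < α < 1/2. -/
/-- For `0 < α < 1`, at the equilibrium point `K₁₋` with
`u₁ = (1 + α - √(α² + 10α + 1))/(2α)` and `q = (1-α)/α`, the isotropisation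
quantity satisfies `u₁ - q + 2 = (7α - 1 - √(α² + 10α + 1))/(2α)`; this is
strictly negative iff `α < 1/2`, and vanishes at `α = 1/2`. Hence small
anisotropy decays at `K₁₋` exactly when `0 < α < 1/2`. -/
theorem K1_minus_isotropisation (α : ℝ) (hα : 0 < α) (hα' : α < 1) :
    let u₁ : ℝ := (1 + α - Real.sqrt (α^2 + 10*α + 1))/(2*α)
    let q : ℝ := (1-α)/α
    u₁ - q + 2 = (7*α - 1 - Real.sqrt (α^2 + 10*α + 1))/(2*α) ∧
    ((7*α - 1 - Real.sqrt (α^2 + 10*α + 1))/(2*α) < 0 ↔ α < 1/2) ∧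
    (α = 1/2 → (7*α - 1 - Real.sqrt (α^2 + 10*α + 1))/(2*α) = 0) := by
  intro u₁ q
  have hαne : α ≠ 0 := ne_of_gt hα
  set s := Real.sqrt (α^2 + 10*α + 1) with hsdef
  have harg : (0:ℝ) ≤ α^2 + 10*α + 1 := by nlinarith
  have hs0 : 0 ≤ s := Real.sqrt_nonneg _
  have hs2 : s^2 = α^2 + 10*α + 1 := Real.sq_sqrt harg
  refine ⟨?_, ?_, ?_⟩
  · show (1 + α - s)/(2*α) - (1-α)/α + 2 = (7*α - 1 - s)/(2*α)
    field_simp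
    ring
  · rw [div_neg_iff]
    constructor
    · rintro (⟨h1, h2⟩ | ⟨h1, h2⟩)
      · linarith
      · by_contra hc
        push_neg at hc
        have h7 : 0 < 7*α - 1 := by linarith
        have : s ≤ 7*α - 1 := by
          have := Real.sqrt_le_sqrt (show α^2 + 10*α + 1 ≤ (7*α-1)^2 by nlinarith)
          rwa [← hsdef, Real.sqrt_sq h7.le] at this
        linarith
    · intro hlt
      right
      constructor
      · rcases le_or_gt (7*α - 1) 0 with h | h
        · rcases h.lt_or_eq with h' | h'
          · linarith
          · have : 0 < α^2 + 10*α + 1 := by nlinarith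
            have : 0 < s := Real.sqrt_pos.mpr this
            linarith
        · have : 7*α - 1 < s := by
            have := Real.sqrt_lt_sqrt (by positivity : (0:ℝ) ≤ (7*α-1)^2)
              (show (7*α-1)^2 < α^2 + 10*α + 1 by nlinarith)
            rwa [Real.sqrt_sq h.le] at this
          linarith
      · linarith
  · intro h
    subst h
    have : s = 5/2 := by
      rw [hsdef, show (1/2:ℝ)^2 + 10*(1/2) + 1 = (5/2)^2 by norm_num,
        Real.sqrt_sq (by norm_num)]
    rw [this]; norm_num
end

section
/- For 0 < α < 1 let u₁ = (2 + α - √(α² + 20α + 4))/(2α), q = (2-α)/α, and j = ((α-2)/α²)·(2 - α(2 + 3q)). Then u₁ < 0 and j - q - 2 = 8(1-α)/α² > 0; consequently the physical-viability quantity u₁/(j - q - 2) is strictly negative and the equilibrium point K₂₋ violates the viability (no-ghost/no-tachyon) condition. -/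
/-- For `0 < α < 1`, at the equilibrium point `K₂₋` with
`u₁ = (2 + α - √(α² + 20α + 4))/(2α)`, `q = (2-α)/α` and jerk
`j = ((α-2)/α²)(2 - α(2 + 3q))`, one has `u₁ < 0` and
`j - q - 2 = 8(1-α)/α² > 0`; consequently the physical-viability quantity
`u₁/(j - q - 2)` is strictly negative, so `K₂₋` violates the
no-ghost/no-tachyon condition. -/
theorem K2_minus_not_viable (α : ℝ) (hα : 0 < α) (hα' : α < 1) :
    let u₁ : ℝ := (2 + α - Real.sqrt (α^2 + 20*α + 4))/(2*α)
    let q : ℝ := (2-α)/α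
    let j : ℝ := ((α - 2)/α^2) * (2 - α*(2 + 3*q))
    u₁ < 0 ∧ j - q - 2 = 8*(1-α)/α^2 ∧ 0 < j - q - 2 ∧
      u₁ / (j - q - 2) < 0 := by
  intro u₁ q j
  have hαne : α ≠ 0 := ne_of_gt hα
  have hsqrt : 2 + α < Real.sqrt (α^2 + 20*α + 4) := by
    have h : (2 + α)^2 < α^2 + 20*α + 4 := by nlinarith
    nlinarith [Real.sq_sqrt (by nlinarith : (0:ℝ) ≤ α^2 + 20*α + 4),
      Real.sqrt_nonneg (α^2 + 20*α + 4)]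
  have hu : u₁ < 0 := div_neg_of_neg_of_pos (by linarith) (by linarith)
  have hjq : j - q - 2 = 8*(1-α)/α^2 := by
    show ((α - 2)/α^2) * (2 - α*(2 + 3*((2-α)/α))) - (2-α)/α - 2 = 8*(1-α)/α^2
    field_simp
    ring
  have hpos : 0 < j - q - 2 := by
    rw [hjq]
    exact div_pos (by linarith) (by positivity)
  exact ⟨hu, hjq, hpos, div_neg_of_neg_of_pos hu hpos⟩
end

section
/- For α > 0 let H(t) = αt/(α² + t²), q = -1 - H'/H² and j = -2 - 3q + H''/H³. Then for every t ≠ 0 the jerk and deceleration parameters satisfy the cosmographic constraint j(t) = ((α - 2)/α²)·(2 - α(2 + 3q(t))). -/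
/-! `H(t) = αt/(α² + t²)` is a rational function, so `H'` and `H''` have closed forms with
denominators powers of `α² + t²`. In `H'/H²` and `H''/H³` these denominators cancel,
leaving `q = -1 - (α² - t²)/(α t²)` and `H''/H³ = -2(3α² - t²)/(α² t²)`; the constraint is
then an identity of rational functions of `α` and `t`. -/

section RationalBounce

variable (c d : ℝ)

theorem hasDerivAt_mul_div_add_sq {t : ℝ} (h : d + t ^ 2 ≠ 0) :
    HasDerivAt (fun t => c * t / (d + t ^ 2)) (c * (d - t ^ 2) / (d + t ^ 2) ^ 2) t := by
  have hnum : HasDerivAt (fun t => c * t) c t := by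
    simpa using (hasDerivAt_id t).const_mul c
  have hden : HasDerivAt (fun t => d + t ^ 2) (2 * t) t := by
    simpa using (hasDerivAt_pow 2 t).const_add d
  exact (hnum.div hden h).congr_deriv (by ring)

theorem hasDerivAt_mul_sub_sq_div_add_sq_sq {t : ℝ} (h : d + t ^ 2 ≠ 0) :
    HasDerivAt (fun t => c * (d - t ^ 2) / (d + t ^ 2) ^ 2)
      (-2 * c * t * (3 * d - t ^ 2) / (d + t ^ 2) ^ 3) t := by
  have hnum : HasDerivAt (fun t => c * (d - t ^ 2)) (c * -(2 * t)) t := by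
    simpa using ((hasDerivAt_pow 2 t).const_sub d).const_mul c
  have hden : HasDerivAt (fun t => (d + t ^ 2) ^ 2) (2 * (d + t ^ 2) * (2 * t)) t := by
    simpa using ((hasDerivAt_pow 2 t).const_add d).fun_pow 2
  exact (hnum.div hden (pow_ne_zero 2 h)).congr_deriv (by field_simp; ring)

theorem deriv_mul_div_add_sq (hd : 0 < d) :
    deriv (fun t => c * t / (d + t ^ 2)) = fun t => c * (d - t ^ 2) / (d + t ^ 2) ^ 2 :=
  funext fun _ => (hasDerivAt_mul_div_add_sq c d (by positivity)).deriv

theorem deriv_deriv_mul_div_add_sq (hd : 0 < d) (t : ℝ) :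
    deriv (deriv (fun t => c * t / (d + t ^ 2))) t =
      -2 * c * t * (3 * d - t ^ 2) / (d + t ^ 2) ^ 3 := by
  rw [deriv_mul_div_add_sq c d hd]
  exact (hasDerivAt_mul_sub_sq_div_add_sq_sq c d (by positivity)).deriv

end RationalBounce

/-- For the bounce ansatz `H(t) = αt/(α² + t²)` with `α > 0`, the deceleration
parameter `q = -1 - H'/H²` and jerk parameter `j = -2 - 3q + H''/H³` satisfy
the cosmographic constraint `j = ((α-2)/α²)·(2 - α(2 + 3q))` for all `t ≠ 0`. -/
theorem bounce_ansatz_cosmographic_constraint (α : ℝ) (hα : 0 < α) :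
    let H : ℝ → ℝ := fun t => α * t / (α^2 + t^2)
    let q : ℝ → ℝ := fun t => -1 - deriv H t / (H t)^2
    let j : ℝ → ℝ := fun t => -2 - 3 * q t + deriv (deriv H) t / (H t)^3
    ∀ t : ℝ, t ≠ 0 → j t = ((α - 2)/α^2) * (2 - α * (2 + 3 * q t)) := by
  intro H q j t ht
  have hα2 : 0 < α ^ 2 := by positivity
  have hH' : deriv H t = α * (α ^ 2 - t ^ 2) / (α ^ 2 + t ^ 2) ^ 2 :=
    congrFun (deriv_mul_div_add_sq α (α ^ 2) hα2) t
  have hH'' : deriv (deriv H) t = -2 * α * t * (3 * α ^ 2 - t ^ 2) / (α ^ 2 + t ^ 2) ^ 3 :=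
    deriv_deriv_mul_div_add_sq α (α ^ 2) hα2 t
  have hden : α ^ 2 + t ^ 2 ≠ 0 := by positivity
  simp only [j, q, hH', hH'', H]
  field_simp
  ring
end

section
/- Let μ₊, μ₋, u₁, u₂, u₃, u₄⁺, u₄⁻, u₅ be real numbers with (μ₊, μ₋) ≠ (0, 0) and u₄⁺ = u₄⁻ = 0, satisfying the Friedmann constraint 1 + u₁ - u₂ + u₃ - ((u₄⁺)² + (u₄⁻)²) - u₅ = 0. If both shear equations vanish, i.e. -(3/2)μ₊(u₁ - u₂ + u₃ - ((u₄⁺)² + (u₄⁻)²) + 1) + u₄⁺(u₁ + u₂ - ((u₄⁺)² + (u₄⁻)²) + 1) = 0 and -(√3/2)μ₋(u₁ - u₂ + u₃ - ((u₄⁺)² + (u₄⁻)²) + 1) + u₄⁻(u₁ + u₂ - ((u₄⁺)² + (u₄⁻)²) + 1) = 0, then 1 + u₁ - u₂ + u₃ = 0 and consequently u₅ = 0: every isotropic equilibrium point of the anisotropic-fluid dynamical system is necessarily a vacuum solution. -/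
/-- In the Bianchi I dynamical system in f(R) gravity with an anisotropic fluid
(`(μ₊, μ₋) ≠ (0, 0)`), every isotropic equilibrium point (`u₄⁺ = u₄⁻ = 0`,
vanishing shear equations) satisfying the Friedmann constraint
`1 + u₁ - u₂ + u₃ - u₄² - u₅ = 0` is necessarily a vacuum solution:
`1 + u₁ - u₂ + u₃ = 0` and `u₅ = 0`. -/
theorem isotropic_equilibrium_is_vacuum
    (μp μm u₁ u₂ u₃ u₄p u₄m u₅ : ℝ)
    (hμ : (μp, μm) ≠ (0, 0))
    (h₄p : u₄p = 0) (h₄m : u₄m = 0)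
    (hconstraint : 1 + u₁ - u₂ + u₃ - (u₄p^2 + u₄m^2) - u₅ = 0)
    (hshearp : -(3/2) * μp * (u₁ - u₂ + u₃ - (u₄p^2 + u₄m^2) + 1)
        + u₄p * (u₁ + u₂ - (u₄p^2 + u₄m^2) + 1) = 0)
    (hshearm : -(Real.sqrt 3/2) * μm * (u₁ - u₂ + u₃ - (u₄p^2 + u₄m^2) + 1)
        + u₄m * (u₁ + u₂ - (u₄p^2 + u₄m^2) + 1) = 0) :
    1 + u₁ - u₂ + u₃ = 0 ∧ u₅ = 0 := by
  subst h₄p h₄m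
  simp only [ne_eq, Prod.mk.injEq, not_and_or] at hμ
  have h : 1 + u₁ - u₂ + u₃ = 0 := by
    rcases hμ with hμ | hμ
    · have := mul_eq_zero.mp (by linarith [hshearp] : μp * (u₁ - u₂ + u₃ + 1) = 0)
      rcases this with h | h
      · exact absurd h hμ
      · linarith
    · have hs : Real.sqrt 3 ≠ 0 := by positivity
      have h3 : Real.sqrt 3 * (μm * (u₁ - u₂ + u₃ + 1)) = 0 := by ring_nf; nlinarith [hshearm]
      rcases mul_eq_zero.mp h3 with h | h
      · exact absurd h hs
      rcases mul_eq_zero.mp h with h | h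
      · exact absurd h hμ
      · linarith
  exact ⟨h, by linarith⟩
end
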